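/- With the reward reparameterization r(y) = β·log(π_θ(y)/π_ref(y)) - log Z(x) for fixed β > 0 and constant log Z(x), the Bradley–Terry probability p(y_w ≻ y_l) = exp(r(y_w))/(exp(r(y_w))+exp(r(y_l))) equals σ(β·(log(π_θ(y_w)/π_ref(y_w)) - log(π_θ(y_l)/π_ref(y_l)))); in particular, the partition-function terms cancel. -/
import Mathlib

noncomputable def sigmoid (x : ℝ) : ℝ := 1 / (1 + Real.exp (-x))

/-- DPO implicit-reward identity: with `r(y) = β·log(π_θ(y)/π_ref(y)) - log Z`, the
Bradley–Terry probability equals the sigmoid of the β-scaled log-ratio difference;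
the partition-function terms cancel. -/
theorem dpo_implicit_reward_identity
    (β logZ : ℝ) (hβ : 0 < β)
    (πθw πθl πrefw πrefl : ℝ)
    (hθw : 0 < πθw) (hθl : 0 < πθl) (hrw : 0 < πrefw) (hrl : 0 < πrefl) :
    Real.exp (β * Real.log (πθw / πrefw) - logZ) /
        (Real.exp (β * Real.log (πθw / πrefw) - logZ)
          + Real.exp (β * Real.log (πθl / πrefl) - logZ))
      = sigmoid (β * (Real.log (πθw / πrefw) - Real.log (πθl / πrefl))) := by
  set a := β * Real.log (πθw / πrefw)
  set b := β * Real.log (πθl / πrefl)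
  have h1 : Real.exp (a - logZ) > 0 := Real.exp_pos _
  have h2 : Real.exp (b - logZ) > 0 := Real.exp_pos _
  have key : Real.exp (-(a - b)) = Real.exp (b - logZ) / Real.exp (a - logZ) := by
    rw [← Real.exp_sub]; ring_nf
  unfold sigmoid
  rw [mul_sub, key]
  field_simp
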